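/- Let a(z) be the formal solution in 1 + z^{-(r+1)}ℂ[[z^{-(r+1)}]] of S_z^r a = (−z)^r a, and suppose the formal orthogonality relations Res_z[ (S_z^⋆)^m(a(ωz)) · S_z^n a(z) ] = 0 hold for all m, n ≥ 0 (ω = e^{iπ/(r+1)}). Let d(z) ∈ 1 + z^{-(r+1)}ℂ[[z^{-(r+1)}]] be the unique solution of −S_z^⋆(d(z)/z) = a(ωz). Then the formal series Ψ(x) := Res_z[ d(z) · Σ_{n≥0} ((−1)^n/n!) S_z^n a(z) x^n · z^{-1} ] is identically equal to 1 as a formal power series in x. -/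

import Mathlib

open HahnSeries Pointwise

/-- The operator `S_z = z^{1-r} ∂_z - (r-1)/(2 z^r) - z` acting on formal Laurent
series with finitely many positive powers of `z`, written in the variable
`t = z⁻¹` (so `coeff m` is the coefficient of `z^{-m}`). -/
noncomputable def Sop (r : ℕ) (f : LaurentSeries ℂ) : LaurentSeries ℂ where
  coeff m := ((r + 1 : ℂ) / 2 - m) * f.coeff (m - r) - f.coeff (m + 1)
  isPWO_support' := by
    have h : (Function.support fun m : ℤ =>
        ((r + 1 : ℂ) / 2 - m) * f.coeff (m - r) - f.coeff (m + 1))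
        ⊆ (f.support + {(r : ℤ)}) ∪ (f.support + ({(-1 : ℤ)} : Set ℤ)) := by
      intro m hm
      simp only [Function.mem_support] at hm
      by_cases h1 : f.coeff (m - (r : ℤ)) = 0
      · have h2 : f.coeff (m + 1) ≠ 0 := fun h2 => hm (by rw [h1, h2]; ring)
        right
        exact Set.mem_add.mpr ⟨m + 1, by simpa using h2, -1, rfl, by ring⟩
      · left
        exact Set.mem_add.mpr ⟨m - r, by simpa using h1, r, rfl, by ring⟩
    exact ((f.isPWO_support.add (Set.isPWO_singleton (r : ℤ))).union
      (f.isPWO_support.add (Set.isPWO_singleton (-1 : ℤ)))).mono h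

/-- The formal adjoint `S_z^⋆ = -z^{1-r} ∂_z + (r-1)/(2 z^r) - z`. -/
noncomputable def Sstar (r : ℕ) (f : LaurentSeries ℂ) : LaurentSeries ℂ where
  coeff m := ((m : ℂ) - (r + 1) / 2) * f.coeff (m - r) - f.coeff (m + 1)
  isPWO_support' := by
    have h : (Function.support fun m : ℤ =>
        ((m : ℂ) - (r + 1) / 2) * f.coeff (m - r) - f.coeff (m + 1))
        ⊆ (f.support + {(r : ℤ)}) ∪ (f.support + ({(-1 : ℤ)} : Set ℤ)) := by
      intro m hm
      simp only [Function.mem_support] at hm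
      by_cases h1 : f.coeff (m - (r : ℤ)) = 0
      · have h2 : f.coeff (m + 1) ≠ 0 := fun h2 => hm (by rw [h1, h2]; ring)
        right
        exact Set.mem_add.mpr ⟨m + 1, by simpa using h2, -1, rfl, by ring⟩
      · left
        exact Set.mem_add.mpr ⟨m - r, by simpa using h1, r, rfl, by ring⟩
    exact ((f.isPWO_support.add (Set.isPWO_singleton (r : ℤ))).union
      (f.isPWO_support.add (Set.isPWO_singleton (-1 : ℤ)))).mono h

/-- Substitution `z ↦ ω z` on a formal Laurent series (`coeff m` is the
coefficient of `z^{-m}`, which gets multiplied by `ω^{-m}`). -/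
noncomputable def rot (ω : ℂ) (f : LaurentSeries ℂ) : LaurentSeries ℂ where
  coeff m := ω ^ (-m) * f.coeff m
  isPWO_support' := f.isPWO_support.mono (fun m hm => by
    simp only [Function.mem_support] at hm ⊢
    exact fun h => hm (by rw [h, mul_zero]))

/-! In the variable `t = z⁻¹`, `Res_z` is the coefficient of `t¹`. With the Euler operator
`E = t ∂_t` one has the Lagrange identity `f · S g - S⋆f · g = (1 - E)(tʳ f g)`, and `1 - E`
kills the coefficient of `t¹`; this is the formal integration by parts
`Res_z[f · S g] = Res_z[S⋆f · g]`. Hence for `n ≥ 1`,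
`Res_z[d z⁻¹ Sⁿ a] = Res_z[S⋆(d/z) · Sⁿ⁻¹ a] = -Res_z[a(ωz) · Sⁿ⁻¹ a] = 0` by orthogonality,
while for `n = 0` only the constant terms of `d` and `a` contribute, since both are series
in `z⁻¹`. -/

section Euler

variable {R : Type*} [Ring R]

noncomputable def eulerOp (f : LaurentSeries R) : LaurentSeries R where
  coeff m := (m : R) * f.coeff m
  isPWO_support' := f.isPWO_support.mono fun m hm h => hm (by simp [h])

@[simp]
theorem coeff_eulerOp (f : LaurentSeries R) (m : ℤ) : (eulerOp f).coeff m = m * f.coeff m :=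
  rfl

theorem support_eulerOp_subset (f : LaurentSeries R) : (eulerOp f).support ⊆ f.support :=
  fun m hm h => hm (by simp [h])

theorem eulerOp_mul (f g : LaurentSeries R) :
    eulerOp (f * g) = eulerOp f * g + f * eulerOp g := by
  ext m
  rw [coeff_add, coeff_mul_left' f.isPWO_support (support_eulerOp_subset f),
    coeff_mul_right' g.isPWO_support (support_eulerOp_subset g), coeff_eulerOp, coeff_mul,
    Finset.mul_sum, ← Finset.sum_add_distrib]
  refine Finset.sum_congr rfl fun ij hij => ?_
  rw [← (Finset.mem_antidiagonal.mp hij).2.2, coeff_eulerOp, coeff_eulerOp, Int.cast_add,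
    add_mul, ← mul_assoc, (Int.cast_commute ij.2 _).left_comm]

theorem eulerOp_single_mul (k : ℤ) (c : R) (f : LaurentSeries R) :
    eulerOp (single k c * f) = (k : R) • (single k c * f) + single k c * eulerOp f := by
  ext m
  simp only [coeff_add, coeff_smul, coeff_eulerOp, coeff_single_mul, smul_eq_mul]
  rw [← (Int.cast_commute (m - k) c).left_comm, ← add_mul, ← Int.cast_add, add_sub_cancel]

end Euler

theorem Sop_eq_eulerOp (r : ℕ) (g : LaurentSeries ℂ) :
    Sop r g = ((r + 1 : ℂ) / 2) • (single (r : ℤ) 1 * g) - eulerOp (single (r : ℤ) 1 * g)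
      - single (-1) 1 * g := by
  ext m
  simp only [Sop, coeff_sub, coeff_smul, coeff_eulerOp, coeff_single_mul, sub_neg_eq_add,
    smul_eq_mul]
  ring

theorem Sstar_eq_eulerOp (r : ℕ) (f : LaurentSeries ℂ) :
    Sstar r f = eulerOp (single (r : ℤ) 1 * f) - ((r + 1 : ℂ) / 2) • (single (r : ℤ) 1 * f)
      - single (-1) 1 * f := by
  ext m
  simp only [Sstar, coeff_sub, coeff_smul, coeff_eulerOp, coeff_single_mul, sub_neg_eq_add,
    smul_eq_mul]
  ring

theorem mul_Sop_sub_Sstar_mul (r : ℕ) (f g : LaurentSeries ℂ) :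
    f * Sop r g - Sstar r f * g
      = single (r : ℤ) 1 * (f * g) - eulerOp (single (r : ℤ) 1 * (f * g)) := by
  rw [Sop_eq_eulerOp, Sstar_eq_eulerOp, eulerOp_single_mul, eulerOp_single_mul,
    eulerOp_single_mul, eulerOp_mul]
  simp only [← C_mul_eq_smul]
  have hC : (C ((r + 1 : ℂ) / 2) + C ((r + 1 : ℂ) / 2) : LaurentSeries ℂ)
      = C ((r : ℤ) : ℂ) + 1 := by
    rw [← map_add, ← map_one C, ← map_add]
    congr 1
    push_cast
    ring
  linear_combination hC * (single (r : ℤ) 1 * (f * g))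

theorem coeff_one_mul_Sop (r : ℕ) (f g : LaurentSeries ℂ) :
    (f * Sop r g).coeff 1 = (Sstar r f * g).coeff 1 := by
  rw [← sub_eq_zero, ← coeff_sub, mul_Sop_sub_Sstar_mul]
  simp

theorem HahnSeries.coeff_zero_mul_of_nonneg {Γ R : Type*} [AddCommMonoid Γ] [PartialOrder Γ]
    [IsOrderedCancelAddMonoid Γ] [NonUnitalNonAssocSemiring R] {x y : HahnSeries Γ R}
    (hx : ∀ g, x.coeff g ≠ 0 → 0 ≤ g) (hy : ∀ g, y.coeff g ≠ 0 → 0 ≤ g) :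
    (x * y).coeff 0 = x.coeff 0 * y.coeff 0 := by
  rw [coeff_mul]
  refine Finset.sum_eq_single (0, 0) (fun ⟨i, j⟩ hij hne => ?_) fun h00 => ?_
  · obtain ⟨hi, hj, hij⟩ := Finset.mem_antidiagonal.mp hij
    obtain ⟨rfl, rfl⟩ := (add_eq_zero_iff_of_nonneg (hx _ hi) (hy _ hj)).mp hij
    exact absurd rfl hne
  · by_cases hx0 : x.coeff 0 = 0
    · simp [hx0]
    · have hy0 : y.coeff 0 = 0 := by_contra fun hy0 =>
        h00 (Finset.mem_antidiagonal.mpr ⟨hx0, hy0, add_zero 0⟩)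
      simp [hy0]

-- `Res_z[d · S_z^n a · z⁻¹]` is the coefficient of `z^0` of `d · S_z^n a`, i.e. its `coeff 0`.
theorem Psi_eq_one_general (r : ℕ) (a d : LaurentSeries ℂ)
    (ha0 : a.coeff 0 = 1)
    (hasupp : ∀ m : ℤ, a.coeff m ≠ 0 → ∃ k : ℕ, m = ((r : ℤ) + 1) * k)
    (hd0 : d.coeff 0 = 1)
    (hdsupp : ∀ m : ℤ, d.coeff m ≠ 0 → ∃ k : ℕ, m = ((r : ℤ) + 1) * k)
    (ω : ℂ)
    (horth : ∀ m n : ℕ,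
      (((Sstar r)^[m] (rot ω a)) * (Sop r)^[n] a).coeff 1 = 0)
    (hd : -(Sstar r (HahnSeries.single (1 : ℤ) 1 * d)) = rot ω a) :
    PowerSeries.mk (fun n => ((-1 : ℂ) ^ n / n.factorial) * (d * (Sop r)^[n] a).coeff 0)
      = 1 := by
  have nonneg_of_supp {f : LaurentSeries ℂ}
      (hf : ∀ m : ℤ, f.coeff m ≠ 0 → ∃ k : ℕ, m = ((r : ℤ) + 1) * k) (m : ℤ)
      (hm : f.coeff m ≠ 0) : 0 ≤ m := by
    obtain ⟨k, rfl⟩ := hf m hm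
    positivity
  ext n
  rw [PowerSeries.coeff_mk, PowerSeries.coeff_one]
  cases n with
  | zero =>
    simp [coeff_zero_mul_of_nonneg (nonneg_of_supp hdsupp) (nonneg_of_supp hasupp), ha0, hd0]
  | succ n =>
    have hres : (d * (Sop r)^[n + 1] a).coeff 0 = 0 := calc
      _ = (single (1 : ℤ) 1 * d * Sop r ((Sop r)^[n] a)).coeff 1 := by
        rw [mul_assoc, coeff_single_mul, Function.iterate_succ_apply']
        simp
      _ = (Sstar r (single 1 1 * d) * (Sop r)^[n] a).coeff 1 := coeff_one_mul_Sop ..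
      _ = -(rot ω a * (Sop r)^[n] a).coeff 1 := by
        rw [← neg_neg (Sstar r _), hd, neg_mul, coeff_neg]
      _ = 0 := by simpa using horth 0 n
    rw [if_neg n.succ_ne_zero, hres, mul_zero]

/-- `Ψ(x) := Res_z[d(z)·Σ_{n≥0} ((-1)^n/n!) S_z^n a(z) x^n · z^{-1}] = 1` as a formal
power series in `x`: the `n`-th coefficient of `Ψ` is
`((-1)^n/n!)·Res_z[d·S_z^n a·z^{-1}] = ((-1)^n/n!)·(d·S_z^n a).coeff 0`
(the coefficient of `z^0`, i.e. `t^0`).  Here `a ∈ 1 + z^{-(r+1)}ℂ[[z^{-(r+1)}]]`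
solves `S_z^r a = (-z)^r a`, the orthogonality relations
`Res_z[(S⋆)^m(a(ωz))·S_z^n a] = 0` hold, and `d` solves `-S_z^⋆(d/z) = a(ωz)`. -/
theorem Psi_eq_one (r : ℕ) (hr : 2 ≤ r) (a d : LaurentSeries ℂ)
    (ha0 : a.coeff 0 = 1)
    (hasupp : ∀ m : ℤ, a.coeff m ≠ 0 → ∃ k : ℕ, m = ((r : ℤ) + 1) * k)
    (hode : (Sop r)^[r] a = ((-1 : ℂ) ^ r) • (HahnSeries.single (-(r : ℤ)) 1 * a))
    (hd0 : d.coeff 0 = 1)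
    (hdsupp : ∀ m : ℤ, d.coeff m ≠ 0 → ∃ k : ℕ, m = ((r : ℤ) + 1) * k)
    (ω : ℂ) (hω : ω = Complex.exp (Real.pi * Complex.I / (r + 1)))
    (horth : ∀ m n : ℕ,
      (((Sstar r)^[m] (rot ω a)) * (Sop r)^[n] a).coeff 1 = 0)
    (hd : -(Sstar r (HahnSeries.single (1 : ℤ) 1 * d)) = rot ω a) :
    PowerSeries.mk (fun n => ((-1 : ℂ) ^ n / n.factorial) * (d * (Sop r)^[n] a).coeff 0)
      = 1 :=
  Psi_eq_one_general r a d ha0 hasupp hd0 hdsupp ω horth hd
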